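/- arXiv:math/9902137 — 3 statements merged into one kernel-verified Lean document; each statement's English description precedes it below -/
import Mathlib

section
/- In a Hausdorff, abelian, cancellative, reduced topological monoid H that allows finite decimation, an element a ∈ H with a ≠ 1 is irreducible if and only if it is topologically irreducible. -/
/-- `H` is reduced: its only unit is `1`. -/
def Reduced (H : Type) [Monoid H] : Prop := ∀ u : H, IsUnit u → u = 1

/-- `H` allows finite decimation: dropping finitely many factors from a convergent
product yields a convergent product. -/
def AllowsFiniteDecimation (H : Type) [CommMonoid H] [TopologicalSpace H] : Prop :=
  ∀ (ι : Type) (f : ι → H) (S : Set ι), Sᶜ.Finite → Multipliable f →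
    Multipliable fun i : S => f i

/-- `a ≠ 1` is irreducible if whenever `a` is a finite product of non-units,
`a` equals one of the factors. -/
def PIrred {H : Type} [CommMonoid H] (a : H) : Prop :=
  a ≠ 1 ∧ ∀ l : List H, (∀ x ∈ l, x ≠ 1) → a = l.prod → a ∈ l

/-- `a ≠ 1` is topologically irreducible if it cannot be written as a convergent
product of non-units, each different from `a`. -/
def TopIrred {H : Type} [CommMonoid H] [TopologicalSpace H] (a : H) : Prop :=
  a ≠ 1 ∧ ¬ ∃ (ι : Type) (f : ι → H), (∀ i, f i ≠ 1 ∧ f i ≠ a) ∧ HasProd f a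

/-- in a Hausdorff, abelian, cancellative, reduced topological monoid
allowing finite decimation, `a ≠ 1` is irreducible iff it is topologically irreducible. -/
theorem irreducible_iff_topologically_irreducible {H : Type} [CancelCommMonoid H]
    [TopologicalSpace H] [T2Space H] [ContinuousMul H]
    (hred : Reduced H) (hdec : AllowsFiniteDecimation H) {a : H} (ha : a ≠ 1) :
    PIrred a ↔ TopIrred a := by
  constructor
  · rintro ⟨-, hirr⟩
    refine ⟨ha, ?_⟩
    rintro ⟨ι, f, hf, hprod⟩
    cases isEmpty_or_nonempty ι with
    | inl h => exact ha (hprod.unique hasProd_empty)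
    | inr h =>
      obtain ⟨i₀⟩ := h
      have hm : Multipliable (fun i : (({i₀} : Set ι)ᶜ : Set ι) => f i) :=
        hdec ι f ({i₀} : Set ι)ᶜ (by simp) hprod.multipliable
      obtain ⟨b, hb⟩ := hm
      have h1 : HasProd (f ∘ (↑) : ({i₀} : Set ι) → H) (f i₀) := hasProd_singleton i₀ f
      have key : f i₀ * b = a := (h1.mul_compl hb).unique hprod
      rcases eq_or_ne b 1 with hb1 | hb1
      · rw [hb1, mul_one] at key
        exact (hf i₀).2 key
      · have hmem := hirr [f i₀, b] (by simp [(hf i₀).1, hb1])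
          (by simp [← key])
        simp only [List.mem_cons, List.not_mem_nil, or_false] at hmem
        rcases hmem with h | h
        · exact (hf i₀).2 h.symm
        · rw [← h] at key
          have : f i₀ * a = 1 * a := by rw [one_mul, key]
          exact (hf i₀).1 (mul_right_cancel this)
  · rintro ⟨-, htop⟩
    refine ⟨ha, fun l hl hal => ?_⟩
    by_contra hmem
    refine htop ⟨Fin l.length, l.get, fun i => ⟨hl _ (l.get_mem i),
      fun h => hmem (h ▸ l.get_mem i)⟩, ?_⟩
    have : a = ∏ i : Fin l.length, l.get i := by
      rw [hal, ← Fin.prod_univ_getElem]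
      rfl
    rw [this]
    exact hasProd_fintype _
end

section
/- Let H be a Hausdorff, abelian, cancellative, reduced topological monoid allowing finite decimation. If b = ∏_{s∈S} e_s^{α_s} is a convergent product where the e_s are pairwise distinct topologically prime elements and α_s ∈ ℕ⁺, then for each s, α_s is the largest integer r ≥ 0 such that e_s^r divides b. Consequently, a factorisation of an element into a convergent product of topologically prime elements, if it exists, is unique. -/
def TopPrime {H : Type} [CommMonoid H] [TopologicalSpace H] (p : H) : Prop :=
  p ≠ 1 ∧ ∀ (ι : Type) (f : ι → H) (g : H), HasProd f g → p ∣ g → ∃ i, p ∣ f i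

section Aux

variable {H : Type} [CancelCommMonoid H] [TopologicalSpace H] [T2Space H] [ContinuousMul H]

lemma topPrime_dvd_of_dvd_pow {p q : H} (hp : TopPrime p) {n : ℕ} (h : p ∣ q ^ n) : p ∣ q := by
  have hq : HasProd (fun _ : Fin n => q) (q ^ n) := by
    simpa using hasProd_fintype (fun _ : Fin n => q)
  obtain ⟨i, hi⟩ := hp.2 (Fin n) _ _ hq h
  exact hi

lemma topPrime_eq_of_dvd (hred : Reduced H) {p q : H} (hp : TopPrime p) (hq : TopPrime q)
    (h : p ∣ q) : p = q := by
  obtain ⟨u, hu⟩ := h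
  have hprod : HasProd (fun i : Bool => if i then p else u) (p * u) := by
    simpa using hasProd_fintype (fun i : Bool => if i then p else u)
  obtain ⟨i, hi⟩ := hq.2 Bool _ _ hprod (hu ▸ dvd_refl q)
  cases i with
  | true =>
    simp only [if_true] at hi
    obtain ⟨v, hv⟩ := hi
    have hq1 : q * 1 = q * (v * u) := by
      rw [mul_one]
      calc q = p * u := hu
        _ = q * v * u := by rw [hv]
        _ = q * (v * u) := by rw [mul_assoc]
    have huv : v * u = 1 := (mul_left_cancel hq1).symm
    have : u = 1 := hred u (IsUnit.of_mul_eq_one (a := u) v (by rw [mul_comm]; exact huv))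
    rw [hu, this, mul_one]
  | false =>
    simp only [Bool.false_eq_true, if_false] at hi
    obtain ⟨w, hw⟩ := hi
    exfalso
    have hq1 : q * 1 = q * (p * w) := by
      rw [mul_one]
      calc q = p * u := hu
        _ = p * (q * w) := by rw [hw]
        _ = q * (p * w) := by rw [mul_left_comm]
    have : p * w = 1 := (mul_left_cancel hq1).symm
    exact hp.1 (hred p (IsUnit.of_mul_eq_one (a := p) w this))

lemma split_one (hdec : AllowsFiniteDecimation H) {S : Type} {g : S → H} {b : H}
    (hb : HasProd g b) (s₀ : S) :
    ∃ c, HasProd (fun t : ↥({s₀}ᶜ : Set S) => g ↑t) c ∧ b = g s₀ * c := by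
  have hfin : (({s₀}ᶜ : Set S)ᶜ).Finite := by simp
  have hm := hdec S g ({s₀}ᶜ : Set S) hfin hb.multipliable
  refine ⟨_, hm.hasProd, ?_⟩
  have h1 : HasProd (g ∘ (↑) : ↥({s₀} : Set S) → H) (g s₀) := by
    have := hasProd_fintype (g ∘ (↑) : ↥({s₀} : Set S) → H)
    simpa using this
  have h2 : HasProd (g ∘ (↑) : ↥(({s₀} : Set S)ᶜ) → H) (∏' t : ↥(({s₀} : Set S)ᶜ), g ↑t) :=
    hm.hasProd
  exact hb.unique (h1.mul_compl h2)

lemma part1 (hred : Reduced H) (hdec : AllowsFiniteDecimation H)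
    {S : Type} (e : S → H) (α : S → ℕ) (b : H)
    (hinj : Function.Injective e) (htp : ∀ s, TopPrime (e s))
    (hb : HasProd (fun s => e s ^ α s) b) (s : S) :
    e s ^ α s ∣ b ∧ ∀ r : ℕ, e s ^ r ∣ b → r ≤ α s := by
  obtain ⟨c, hc, hbc⟩ := split_one hdec hb s
  refine ⟨⟨c, hbc⟩, ?_⟩
  intro r hr
  by_contra hlt
  push_neg at hlt
  obtain ⟨x, hx⟩ := hr
  have hcc : c = e s ^ (r - α s) * x := by
    have h1 : e s ^ α s * c = e s ^ α s * (e s ^ (r - α s) * x) := by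
      rw [← hbc, hx, ← mul_assoc, ← pow_add]
      congr 2
      omega
    exact mul_left_cancel h1
  have hec : e s ∣ c := by
    refine ⟨e s ^ (r - α s - 1) * x, ?_⟩
    rw [hcc, ← mul_assoc]
    congr 1
    rw [mul_comm (e s)]
    rw [← pow_succ]
    congr 1
    omega
  obtain ⟨t, ht⟩ := (htp s).2 _ _ _ hc hec
  have heq : e s = e ↑t :=
    topPrime_eq_of_dvd hred (htp s) (htp ↑t) (topPrime_dvd_of_dvd_pow (htp s) ht)
  exact t.2 (Set.mem_singleton_iff.mpr (hinj heq).symm)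

end Aux

/-- if `b = ∏_{s∈S} e_s^{α_s}` is a convergent product of pairwise distinct
topologically prime elements with `α_s ≥ 1`, then each `α_s` is the largest `r` with
`e_s^r ∣ b`; consequently such a factorisation is unique. -/
theorem topPrime_factorisation_exponents_maximal {H : Type} [CancelCommMonoid H]
    [TopologicalSpace H] [T2Space H] [ContinuousMul H]
    (hred : Reduced H) (hdec : AllowsFiniteDecimation H)
    {S : Type} (e : S → H) (α : S → ℕ) (b : H)
    (hinj : Function.Injective e) (htp : ∀ s, TopPrime (e s)) (hα : ∀ s, 0 < α s)
    (hb : HasProd (fun s => e s ^ α s) b) :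
    (∀ s, e s ^ α s ∣ b ∧ ∀ r : ℕ, e s ^ r ∣ b → r ≤ α s) ∧
    ∀ (T : Type) (f : T → H) (β : T → ℕ), Function.Injective f → (∀ t, TopPrime (f t)) →
      (∀ t, 0 < β t) → HasProd (fun t => f t ^ β t) b →
      ∀ t, ∃ s, f t = e s ∧ β t = α s := by
  have hpart1 := fun s => part1 hred hdec e α b hinj htp hb s
  refine ⟨hpart1, ?_⟩
  intro T f β hfinj hftp hβ hf t
  have hfpart1 := fun t => part1 hred hdec f β b hfinj hftp hf t
  have hftb : f t ∣ b := dvd_trans (dvd_pow_self (f t) (hβ t).ne') (hfpart1 t).1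
  obtain ⟨s, hs⟩ := (hftp t).2 S _ b hb hftb
  have hfe : f t = e s :=
    topPrime_eq_of_dvd hred (hftp t) (htp s) (topPrime_dvd_of_dvd_pow (hftp t) hs)
  refine ⟨s, hfe, le_antisymm ?_ ?_⟩
  · exact (hpart1 s).2 (β t) (by rw [← hfe]; exact (hfpart1 t).1)
  · exact (hfpart1 t).2 (α s) (by rw [hfe]; exact (hpart1 s).1)
end

section
/- Let H be a Hausdorff, abelian, cancellative, reduced topological monoid allowing finite decimation. If every non-unit of H can be written as a convergent product of topologically prime elements, then H is topologically prime factorial, i.e., any two such factorisations of an element are equivalent (assign equal multiplicities to each element). -/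
section Aux

variable {H : Type} [CancelCommMonoid H] [TopologicalSpace H]

/-- If a topological prime divides a topological prime, they are equal. -/
lemma topPrime_dvd_topPrime_eq (hred : Reduced H) {p q : H}
    (hp : TopPrime p) (hq : TopPrime q) (hpq : p ∣ q) : p = q := by
  obtain ⟨c, hc⟩ := hpq
  have hprod : HasProd ![p, c] (p * c) := by
    simpa [Fin.prod_univ_two] using hasProd_fintype ![p, c]
  obtain ⟨i, hi⟩ := hq.2 (Fin 2) ![p, c] (p * c) hprod (hc ▸ dvd_refl q)
  fin_cases i
  · -- q ∣ p
    have hi' : q ∣ p := hi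
    obtain ⟨d, hd⟩ := hi'
    have h1 : d * c = 1 := by
      apply mul_left_cancel (a := q)
      rw [mul_one, ← mul_assoc, ← hd, ← hc]
    have hc1 : c = 1 := hred c (IsUnit.of_mul_eq_one (a := c) d (by rw [mul_comm]; exact h1))
    rw [hc, hc1, mul_one]
  · -- q ∣ c, impossible
    have hi' : q ∣ c := hi
    obtain ⟨e, he⟩ := hi'
    exfalso
    apply hp.1
    have h1 : p * e = 1 := by
      apply mul_left_cancel (a := q)
      rw [mul_one, ← mul_assoc, mul_comm q p, mul_assoc, ← he, ← hc]
    exact hred p (IsUnit.of_mul_eq_one (a := p) e h1)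

variable [T2Space H] [ContinuousMul H]

/-- Peel off one factor from a convergent product. -/
lemma peel_one (hdec : AllowsFiniteDecimation H) {ι : Type} {f : ι → H} {h : H}
    (hf : HasProd f h) (i₀ : ι) :
    ∃ h', h = f i₀ * h' ∧ HasProd (fun i : ({i₀}ᶜ : Set ι) => f i.1) h' := by
  have hS : (({i₀}ᶜ : Set ι))ᶜ.Finite := by simp
  obtain ⟨h', hh'⟩ := hdec ι f ({i₀}ᶜ : Set ι) hS hf.multipliable
  have hsing : HasProd (f ∘ (↑) : ((({i₀}ᶜ : Set ι))ᶜ : Set ι) → H) (f i₀) := by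
    rw [compl_compl]
    exact hasProd_singleton i₀ f
  have htot : HasProd f (h' * f i₀) := HasProd.mul_compl hh' hsing
  refine ⟨h', ?_, hh'⟩
  rw [mul_comm]
  exact hf.unique htot

/-- Key counting lemma: a multiset of `n` occurrences of `x` among the `f i` can be matched
by `n` occurrences among the `g j`. -/
lemma count_transfer (hred : Reduced H) (hdec : AllowsFiniteDecimation H) (x : H) :
    ∀ (n : ℕ) (h : H) (ι κ : Type) (f : ι → H) (g : κ → H),
      (∀ i, TopPrime (f i)) → (∀ j, TopPrime (g j)) → HasProd f h → HasProd g h →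
      ∀ s : Finset ι, (∀ i ∈ s, f i = x) → s.card = n →
      ∃ t : Finset κ, (∀ j ∈ t, g j = x) ∧ t.card = n := by
  classical
  intro n
  induction n with
  | zero => exact fun _ _ _ _ _ _ _ _ _ _ _ _ => ⟨∅, by simp, rfl⟩
  | succ n IH =>
    intro h ι κ f g hf hg hfh hgh s hs hcard
    obtain ⟨i₀, hi₀⟩ : s.Nonempty := by rw [← Finset.card_pos, hcard]; omega
    obtain ⟨h₁, hh1, hf'⟩ := peel_one hdec hfh i₀
    have hdvd : f i₀ ∣ h := ⟨h₁, hh1⟩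
    obtain ⟨j₀, hj₀⟩ := (hf i₀).2 κ g h hgh hdvd
    have hxg : f i₀ = g j₀ := topPrime_dvd_topPrime_eq hred (hf i₀) (hg j₀) hj₀
    obtain ⟨h₂, hh2, hg'⟩ := peel_one hdec hgh j₀
    have h12 : h₁ = h₂ := by
      apply mul_left_cancel (a := f i₀)
      rw [← hh1, hxg, ← hh2]
    -- the remaining occurrences of x in f
    let s' : Finset ({i₀}ᶜ : Set ι) :=
      (s.erase i₀).attach.map
        ⟨fun i => ⟨i.1, by simpa using Finset.ne_of_mem_erase i.2⟩,
         fun a b hab => Subtype.ext (by simpa using congrArg Subtype.val hab)⟩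
    have hs' : ∀ i ∈ s', f i.1 = x := by
      intro i hi
      simp only [s', Finset.mem_map, Finset.mem_attach, Function.Embedding.coeFn_mk,
        true_and] at hi
      obtain ⟨a, ha⟩ := hi
      rw [← ha]
      exact hs a.1 (Finset.mem_of_mem_erase a.2)
    have hcard' : s'.card = n := by
      simp only [s', Finset.card_map, Finset.card_attach,
        Finset.card_erase_of_mem hi₀, hcard]
      omega
    obtain ⟨t', ht', htc⟩ := IH h₁ _ _ (fun i : ({i₀}ᶜ : Set ι) => f i.1)
      (fun j : ({j₀}ᶜ : Set κ) => g j.1) (fun i => hf i.1) (fun j => hg j.1)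
      hf' (h12 ▸ hg') s' hs' hcard'
    refine ⟨insert j₀ (t'.map ⟨Subtype.val, Subtype.val_injective⟩), ?_, ?_⟩
    · intro j hj
      rcases Finset.mem_insert.1 hj with rfl | hj
      · rw [← hxg]; exact hs i₀ hi₀
      · obtain ⟨j', hj', rfl⟩ := Finset.mem_map.1 hj
        exact ht' j' hj'
    · rw [Finset.card_insert_of_notMem, Finset.card_map, htc]
      intro hmem
      obtain ⟨j', _, hje⟩ := Finset.mem_map.1 hmem
      exact j'.2 (by simpa using hje)

lemma encard_le_transfer (hred : Reduced H) (hdec : AllowsFiniteDecimation H)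
    {h : H} {ι κ : Type} {f : ι → H} {g : κ → H}
    (hf : ∀ i, TopPrime (f i)) (hg : ∀ j, TopPrime (g j))
    (hfh : HasProd f h) (hgh : HasProd g h) (x : H) :
    {i : ι | f i = x}.encard ≤ {j : κ | g j = x}.encard := by
  by_contra hlt
  push_neg at hlt
  -- then the g-fiber is finite, say of size m, and the f-fiber contains m+1 elements
  have hBne : {j : κ | g j = x}.encard ≠ ⊤ := (hlt.trans_le le_top).ne
  obtain ⟨m, hm⟩ := WithTop.ne_top_iff_exists.1 hBne
  have hm1 : ((m + 1 : ℕ) : ℕ∞) ≤ {i : ι | f i = x}.encard := by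
    rw [← hm] at hlt
    exact_mod_cast Order.add_one_le_of_lt hlt
  obtain ⟨A, hAsub, hAcard⟩ := Set.exists_subset_encard_eq hm1
  have hAfin : A.Finite := Set.finite_of_encard_eq_coe hAcard
  have hAfcard : hAfin.toFinset.card = m + 1 := by
    have := hAfin.encard_eq_coe_toFinset_card
    rw [hAcard] at this
    exact_mod_cast this.symm
  obtain ⟨t, ht, htc⟩ := count_transfer hred hdec x (m + 1) h ι κ f g hf hg hfh hgh
    hAfin.toFinset (fun i hi => hAsub (hAfin.mem_toFinset.1 hi)) hAfcard
  have hts : (↑t : Set κ) ⊆ {j : κ | g j = x} := fun j hj => ht j (by exact_mod_cast hj)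
  have : ((m + 1 : ℕ) : ℕ∞) ≤ ((m : ℕ) : ℕ∞) := by
    calc ((m + 1 : ℕ) : ℕ∞) = (↑t : Set κ).encard := by
          rw [Set.encard_coe_eq_coe_finsetCard, htc]
      _ ≤ {j : κ | g j = x}.encard := Set.encard_mono hts
      _ = ((m : ℕ) : ℕ∞) := hm.symm
  have : m + 1 ≤ m := by exact_mod_cast this
  omega

end Aux

/-- if every non-unit of `H` is a convergent product of topologically prime
elements, then any two such factorisations of an element are equivalent: they assign equal
multiplicities to each element of `H`. -/
theorem topologically_prime_atomic_is_factorial {H : Type} [CancelCommMonoid H]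
    [TopologicalSpace H] [T2Space H] [ContinuousMul H]
    (hred : Reduced H) (hdec : AllowsFiniteDecimation H)
    (hatomic : ∀ h : H, h ≠ 1 →
      ∃ (ι : Type) (f : ι → H), (∀ i, TopPrime (f i)) ∧ HasProd f h) :
    ∀ (h : H) (ι κ : Type) (f : ι → H) (g : κ → H),
      (∀ i, TopPrime (f i)) → (∀ j, TopPrime (g j)) → HasProd f h → HasProd g h →
      ∀ x : H, Nat.card {i : ι | f i = x} = Nat.card {j : κ | g j = x} := by
  intro h ι κ f g hf hg hfh hgh x
  have h1 := encard_le_transfer hred hdec hf hg hfh hgh x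
  have h2 := encard_le_transfer hred hdec hg hf hgh hfh x
  have he : {i : ι | f i = x}.encard = {j : κ | g j = x}.encard := le_antisymm h1 h2
  rw [Nat.card_coe_set_eq, Nat.card_coe_set_eq, Set.ncard_def, Set.ncard_def, he]
end
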